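/- In the equally spaced piecewise linear setting, for every integer K ≥ 1 and every c ≥ 0 one has Γ_K(c) ⊆ Γ_{K+1}(c), and for c > 0 the Lebesgue measure of Γ_{K+1}(c) is strictly larger than that of Γ_K(c). Consequently, for every μ > 0 and X > 0, c̄_{K+1}(X, μ) < c̄_K(X, μ): adding one more staggered work start time strictly lowers the equilibrium commuting cost. -/

import Mathlib

open MeasureTheory

/-- Piecewise linear schedule delay cost with preferred arrival time `tk`. -/
noncomputable def sdc (β γ tk t : ℝ) : ℝ := if t < tk then β * (tk - t) else γ * (t - tk)

/-- The `k`-th preferred arrival time `t_k = t₁ + (k-1)d`. -/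
noncomputable def tpref (t₁ d : ℝ) (k : ℕ) : ℝ := t₁ + ((k : ℝ) - 1) * d

/-- The envelope `ĉ_K(t) = min_{1 ≤ k ≤ K} c_k(t)`. -/
noncomputable def env (β γ t₁ d : ℝ) (K : ℕ) (t : ℝ) : ℝ :=
  sInf ((fun k : ℕ => sdc β γ (tpref t₁ d k) t) '' Set.Icc 1 K)

/-- The sublevel set `Γ_K(c) = {t : ĉ_K(t) ≤ c}`. -/
noncomputable def Gam (β γ t₁ d : ℝ) (K : ℕ) (c : ℝ) : Set ℝ :=
  {t : ℝ | env β γ t₁ d K t ≤ c}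

/-- `IsCbar β γ t₁ d K X μ c` says that `c` is (a, hence the unique) value `c̄_K(X, μ)`:
`c ≥ 0` and `μ · Leb(Γ_K(c)) = X`. -/
noncomputable def IsCbar (β γ t₁ d : ℝ) (K : ℕ) (X μ c : ℝ) : Prop :=
  0 ≤ c ∧ μ * (volume (Gam β γ t₁ d K c)).toReal = X

lemma sdc_le_iff {β γ : ℝ} (hβ : 0 < β) (hγ : 0 < γ) {c : ℝ} (hc : 0 ≤ c) (tk t : ℝ) :
    sdc β γ tk t ≤ c ↔ tk - c / β ≤ t ∧ t ≤ tk + c / γ := by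
  have hcβ : 0 ≤ c / β := div_nonneg hc hβ.le
  have hcγ : 0 ≤ c / γ := div_nonneg hc hγ.le
  unfold sdc
  split_ifs with h
  · constructor
    · intro hle
      have h1 : tk - t ≤ c / β := by rw [le_div_iff₀ hβ]; nlinarith
      exact ⟨by linarith, by linarith⟩
    · rintro ⟨h1, -⟩
      have h2 : tk - t ≤ c / β := by linarith
      have := (le_div_iff₀ hβ).1 h2; nlinarith
  · push_neg at h
    constructor
    · intro hle
      have h1 : t - tk ≤ c / γ := by rw [le_div_iff₀ hγ]; nlinarith
      exact ⟨by linarith, by linarith⟩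
    · rintro ⟨-, h2⟩
      have h3 : t - tk ≤ c / γ := by linarith
      have := (le_div_iff₀ hγ).1 h3; nlinarith

lemma gam_eq {β γ : ℝ} (hβ : 0 < β) (hγ : 0 < γ) (t₁ d : ℝ) {K : ℕ} (hK : 1 ≤ K) {c : ℝ}
    (hc : 0 ≤ c) :
    Gam β γ t₁ d K c =
      ⋃ k ∈ Finset.Icc 1 K, Set.Icc (tpref t₁ d k - c / β) (tpref t₁ d k + c / γ) := by
  ext t
  simp only [Gam, env, Set.mem_setOf_eq, Set.mem_iUnion, Finset.mem_Icc, Set.mem_Icc,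
    exists_prop]
  set f := fun k : ℕ => sdc β γ (tpref t₁ d k) t with hf
  have hne : (f '' Set.Icc 1 K).Nonempty :=
    ⟨f 1, Set.mem_image_of_mem f (Set.mem_Icc.2 ⟨le_refl 1, hK⟩)⟩
  have hfin : (f '' Set.Icc 1 K).Finite := (Set.finite_Icc 1 K).image f
  constructor
  · intro h
    have hmem := hne.csInf_mem hfin
    obtain ⟨k, hk, hfk⟩ := hmem
    refine ⟨k, Set.mem_Icc.1 hk, ?_⟩
    have hle : f k ≤ c := by rw [hfk]; exact h
    exact (sdc_le_iff hβ hγ hc _ t).1 hle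
  · rintro ⟨k, hk, hmem⟩
    have hle : f k ≤ c := (sdc_le_iff hβ hγ hc _ t).2 hmem
    exact le_trans (csInf_le hfin.bddBelow (Set.mem_image_of_mem f (Set.mem_Icc.2 hk))) hle

lemma gam_vol_ne_top {β γ : ℝ} (hβ : 0 < β) (hγ : 0 < γ) (t₁ d : ℝ) {K : ℕ} (hK : 1 ≤ K)
    {c : ℝ} (hc : 0 ≤ c) : volume (Gam β γ t₁ d K c) ≠ ⊤ := by
  rw [gam_eq hβ hγ t₁ d hK hc]
  exact (measure_biUnion_lt_top (Finset.Icc 1 K).finite_toSet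
    (fun i _ => measure_Icc_lt_top)).ne

lemma tpref_mono (t₁ : ℝ) {d : ℝ} (hd : 0 < d) {j k : ℕ} (h : j ≤ k) :
    tpref t₁ d j ≤ tpref t₁ d k := by
  have : (j : ℝ) ≤ k := Nat.cast_le.2 h
  unfold tpref; nlinarith

/-- Adding one more staggered work start time enlarges the sublevel sets
(`Γ_K(c) ⊆ Γ_{K+1}(c)`, with strictly larger measure for `c > 0`) and hence
strictly lowers the equilibrium commuting cost: `c̄_{K+1}(X, μ) < c̄_K(X, μ)`. -/
theorem stmt7 (β γ : ℝ) (hβ : 0 < β) (hγ : 0 < γ) (δ : ℝ) (hδ : δ = β * γ / (β + γ))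
    (K : ℕ) (hK : 1 ≤ K) (d : ℝ) (hd : 0 < d) (t₁ : ℝ) :
    (∀ c : ℝ, 0 ≤ c → Gam β γ t₁ d K c ⊆ Gam β γ t₁ d (K + 1) c) ∧
    (∀ c : ℝ, 0 < c →
      volume (Gam β γ t₁ d K c) < volume (Gam β γ t₁ d (K + 1) c)) ∧
    (∀ μ X : ℝ, 0 < μ → 0 < X → ∀ c₁ c₂ : ℝ,
      IsCbar β γ t₁ d K X μ c₁ → IsCbar β γ t₁ d (K + 1) X μ c₂ → c₂ < c₁) := by
  -- Part 1 : subsets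
  have hsub : ∀ c : ℝ, Gam β γ t₁ d K c ⊆ Gam β γ t₁ d (K + 1) c := by
    intro c t ht
    have hne : ((fun k : ℕ => sdc β γ (tpref t₁ d k) t) '' Set.Icc 1 K).Nonempty :=
      ⟨_, Set.mem_image_of_mem _ (Set.mem_Icc.2 ⟨le_refl 1, hK⟩)⟩
    have hmono : env β γ t₁ d (K + 1) t ≤ env β γ t₁ d K t := by
      apply csInf_le_csInf (((Set.finite_Icc 1 (K + 1)).image _).bddBelow) hne
      exact Set.image_mono (Set.Icc_subset_Icc le_rfl (Nat.le_succ K))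
    exact le_trans hmono ht
  -- Part 2 : strict measure increase
  have hstrict : ∀ c : ℝ, 0 < c →
      volume (Gam β γ t₁ d K c) < volume (Gam β γ t₁ d (K + 1) c) := by
    intro c hc
    have hc' : (0 : ℝ) ≤ c := hc.le
    set a : ℝ := max (tpref t₁ d (K + 1) - c / β) (tpref t₁ d K + c / γ) with ha
    set b : ℝ := tpref t₁ d (K + 1) + c / γ with hb
    have htd : tpref t₁ d (K + 1) = tpref t₁ d K + d := by
      unfold tpref; push_cast; ring
    have hcβ : 0 < c / β := div_pos hc hβ
    have hcγ : 0 < c / γ := div_pos hc hγ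
    have hab : a < b := by
      apply max_lt
      · rw [hb]; linarith
      · rw [hb, htd]; linarith
    have hJsub : Set.Ioc a b ⊆ Gam β γ t₁ d (K + 1) c := by
      intro t ht
      rw [gam_eq hβ hγ t₁ d (le_trans hK (Nat.le_succ K)) hc']
      refine Set.mem_biUnion (Finset.mem_Icc.2 ⟨Nat.one_le_iff_ne_zero.2 (Nat.succ_ne_zero K),
        le_refl _⟩) ?_
      refine Set.mem_Icc.2 ⟨?_, ht.2⟩
      have := ht.1
      have h1 : tpref t₁ d (K + 1) - c / β ≤ a := le_max_left _ _
      linarith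
    have hJdisj : Disjoint (Gam β γ t₁ d K c) (Set.Ioc a b) := by
      rw [Set.disjoint_right]
      intro t ht htG
      rw [gam_eq hβ hγ t₁ d hK hc'] at htG
      obtain ⟨k, hk, hmem⟩ := Set.mem_iUnion₂.1 htG
      have hk' : k ≤ K := (Finset.mem_Icc.1 hk).2
      have h1 : t ≤ tpref t₁ d k + c / γ := (Set.mem_Icc.1 hmem).2
      have h2 : tpref t₁ d k ≤ tpref t₁ d K := tpref_mono t₁ hd hk'
      have h3 : tpref t₁ d K + c / γ ≤ a := le_max_right _ _
      have h4 : a < t := ht.1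
      linarith
    have hmeas : volume (Gam β γ t₁ d K c ∪ Set.Ioc a b)
        = volume (Gam β γ t₁ d K c) + volume (Set.Ioc a b) :=
      measure_union hJdisj measurableSet_Ioc
    have hle : volume (Gam β γ t₁ d K c) + volume (Set.Ioc a b)
        ≤ volume (Gam β γ t₁ d (K + 1) c) := by
      rw [← hmeas]
      exact measure_mono (Set.union_subset (hsub c) hJsub)
    have hJpos : volume (Set.Ioc a b) ≠ 0 := by
      rw [Real.volume_Ioc]
      simp only [ne_eq, ENNReal.ofReal_eq_zero, not_le]
      linarith
    have hfin : volume (Gam β γ t₁ d K c) ≠ ⊤ := gam_vol_ne_top hβ hγ t₁ d hK hc'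
    calc volume (Gam β γ t₁ d K c)
        < volume (Gam β γ t₁ d K c) + volume (Set.Ioc a b) :=
          ENNReal.lt_add_right hfin hJpos
      _ ≤ _ := hle
  refine ⟨fun c _ => hsub c, hstrict, ?_⟩
  -- Part 3
  rintro μ X hμ hX c₁ c₂ ⟨hc₁0, h1⟩ ⟨hc₂0, h2⟩
  by_contra hcon
  push_neg at hcon
  -- c₁ > 0
  have hc₁pos : 0 < c₁ := by
    rcases lt_or_eq_of_le hc₁0 with h | h
    · exact h
    · exfalso
      have hz : volume (Gam β γ t₁ d K c₁) = 0 := by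
        rw [gam_eq hβ hγ t₁ d hK hc₁0]
        refine measure_biUnion_null_iff ((Finset.Icc 1 K).countable_toSet) |>.2 ?_
        intro k _
        rw [Real.volume_Icc, ← h]
        simp
      rw [hz] at h1
      simp at h1
      linarith
  -- monotone in c
  have hGmono : Gam β γ t₁ d (K + 1) c₁ ⊆ Gam β γ t₁ d (K + 1) c₂ :=
    fun t ht => le_trans ht hcon
  have hlt : volume (Gam β γ t₁ d K c₁) < volume (Gam β γ t₁ d (K + 1) c₂) :=
    lt_of_lt_of_le (hstrict c₁ hc₁pos) (measure_mono hGmono)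
  have hfin1 : volume (Gam β γ t₁ d K c₁) ≠ ⊤ := gam_vol_ne_top hβ hγ t₁ d hK hc₁0
  have hfin2 : volume (Gam β γ t₁ d (K + 1) c₂) ≠ ⊤ :=
    gam_vol_ne_top hβ hγ t₁ d (le_trans hK (Nat.le_succ K)) hc₂0
  have htR : (volume (Gam β γ t₁ d K c₁)).toReal
      < (volume (Gam β γ t₁ d (K + 1) c₂)).toReal :=
    (ENNReal.toReal_lt_toReal hfin1 hfin2).2 hlt
  have : μ * (volume (Gam β γ t₁ d K c₁)).toReal
      < μ * (volume (Gam β γ t₁ d (K + 1) c₂)).toReal :=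
    mul_lt_mul_of_pos_left htR hμ
  rw [h1, h2] at this
  exact lt_irrefl X this
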